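/- arXiv:2109.11966 — 3 statements merged into one kernel-verified Lean document; each statement's English description precedes it below -/
import Mathlib

section
/- In the polynomial ring ℚ[a,b,u,v] define X = u·v·(u−v)·(u−b·v), Y = u·(u−v)·(u−a·v)·(b·u−a·v), Z = v·(u−a·v)·(u−b·v)·(b·u−a·v), and define the quartic form F(x,y,z) = (−a·b^3 + b^4 + a^2·b − a·b^2)·x^2·y^2 + (a^2·b^3 − a^3·b − a·b^3 − a^3 + 3·a^2·b − a·b^2)·x^2·y·z + (a·b^2 − 2·b^3 − a^2 + a·b + b^2)·x·y^2·z + (a^4 − a^3·b − a^3 + a^2·b)·x^2·z^2 + (2·a^2·b − a·b^2 − a^2 − a·b + b^2)·x·y·z^2 + (b^2 − b)·y^2·z^2. Then F(X,Y,Z) = 0 identically in ℚ[a,b,u,v]. -/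
namespace Stmt2

noncomputable section

open MvPolynomial

/-- The ring `ℚ[a,b,u,v]`. -/
abbrev R : Type := MvPolynomial (Fin 4) ℚ

def a : R := X 0
def b : R := X 1
def u : R := X 2
def v : R := X 3

/-- `X = u·v·(u−v)·(u−b·v)`. -/
def Xp : R := u * v * (u - v) * (u - b * v)

/-- `Y = u·(u−v)·(u−a·v)·(b·u−a·v)`. -/
def Yp : R := u * (u - v) * (u - a * v) * (b * u - a * v)

/-- `Z = v·(u−a·v)·(u−b·v)·(b·u−a·v)`. -/
def Zp : R := v * (u - a * v) * (u - b * v) * (b * u - a * v)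

/-- The quartic form `F_{a,b}(x,y,z)`. -/
def F (x y z : R) : R :=
  (-(a * b ^ 3) + b ^ 4 + a ^ 2 * b - a * b ^ 2) * x ^ 2 * y ^ 2
  + (a ^ 2 * b ^ 3 - a ^ 3 * b - a * b ^ 3 - a ^ 3 + 3 * a ^ 2 * b - a * b ^ 2) * x ^ 2 * y * z
  + (a * b ^ 2 - 2 * b ^ 3 - a ^ 2 + a * b + b ^ 2) * x * y ^ 2 * z
  + (a ^ 4 - a ^ 3 * b - a ^ 3 + a ^ 2 * b) * x ^ 2 * z ^ 2
  + (2 * a ^ 2 * b - a * b ^ 2 - a ^ 2 - a * b + b ^ 2) * x * y * z ^ 2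
  + (b ^ 2 - b) * y ^ 2 * z ^ 2

/-- The parametrization `(X : Y : Z)` of `ℙ¹` lands on the quartic `F = 0`. -/
theorem quartic_parametrization : F Xp Yp Zp = 0 := by
  unfold F Xp Yp Zp a b u v
  ring

end

end Stmt2
end

section
/- Fix a, b ∈ ℂ. In R = ℂ[z_1,x_1,y_1,z_2,x_2,y_2] let f_1 = y_1^2 − (x_1^3 + a·x_1·z_1^4 + b·z_1^6) and f_2 = y_2^2 − (x_2^3 + a·x_2·z_2^4 + b·z_2^6), let I be the ideal generated by f_1 and f_2, and let A = R/I. Grade R by assigning to a monomial the bidegree (d_1,d_2) where d_1 is its weighted degree in (z_1,x_1,y_1) with weights (1,2,3) and d_2 its weighted degree in (z_2,x_2,y_2) with weights (1,2,3). Let σ be the ℂ-algebra automorphism of R exchanging z_1 ↔ z_2, x_1 ↔ x_2, y_1 ↔ y_2 (it swaps f_1 and f_2, hence descends to A). Define t_0 = z_1·z_2, t_1 = x_1·x_2, t_2 = z_1^2·x_2 + x_1·z_2^2, t_3 = y_1·y_2, t_4 = z_1·x_1·y_2 + y_1·z_2·x_2, t_5 = z_1^3·y_2 + y_1·z_2^3,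 t_6 = z_1·y_1·x_2^2 + x_1^2·z_2·y_2. Then: for every m ∈ ℕ and every polynomial P ∈ R that is bihomogeneous of bidegree (m,m) and satisfies σ(P) = P, the class of P in A lies in the ℂ-subalgebra of A generated by the classes of t_0, t_1, t_2, t_3, t_4, t_5, t_6. -/
namespace Stmt6

noncomputable section

open MvPolynomial

/-- The ring `ℂ[z₁,x₁,y₁,z₂,x₂,y₂]` (variables indexed `z₁=0, x₁=1, y₁=2,
z₂=3, x₂=4, y₂=5`). -/
abbrev R : Type := MvPolynomial (Fin 6) ℂ

def z₁ : R := X 0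
def x₁ : R := X 1
def y₁ : R := X 2
def z₂ : R := X 3
def x₂ : R := X 4
def y₂ : R := X 5

/-- The first Weierstrass relation `f₁ = y₁² − (x₁³ + a·x₁·z₁⁴ + b·z₁⁶)`. -/
def f₁ (a b : ℂ) : R := y₁ ^ 2 - (x₁ ^ 3 + C a * x₁ * z₁ ^ 4 + C b * z₁ ^ 6)

/-- The second Weierstrass relation `f₂ = y₂² − (x₂³ + a·x₂·z₂⁴ + b·z₂⁶)`. -/
def f₂ (a b : ℂ) : R := y₂ ^ 2 - (x₂ ^ 3 + C a * x₂ * z₂ ^ 4 + C b * z₂ ^ 6)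

/-- The ideal `I = (f₁, f₂)`, so `A = R/I` is the bihomogeneous coordinate
ring of `E × E`. -/
def I (a b : ℂ) : Ideal R := Ideal.span {f₁ a b, f₂ a b}

/-- The weight giving the first weighted degree `d₁`: weights `(1,2,3)` on
`(z₁,x₁,y₁)` and `0` on the second set of variables. -/
def w₁ : Fin 6 → ℕ := ![1, 2, 3, 0, 0, 0]

/-- The weight giving the second weighted degree `d₂`. -/
def w₂ : Fin 6 → ℕ := ![0, 0, 0, 1, 2, 3]

/-- The involution `σ` exchanging the two sets of variables
`z₁ ↔ z₂, x₁ ↔ x₂, y₁ ↔ y₂`, as a renaming of variables. -/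
def σ : Fin 6 → Fin 6 := ![3, 4, 5, 0, 1, 2]

def t₀ : R := z₁ * z₂
def t₁ : R := x₁ * x₂
def t₂ : R := z₁ ^ 2 * x₂ + x₁ * z₂ ^ 2
def t₃ : R := y₁ * y₂
def t₄ : R := z₁ * x₁ * y₂ + y₁ * z₂ * x₂
def t₅ : R := z₁ ^ 3 * y₂ + y₁ * z₂ ^ 3
def t₆ : R := z₁ * y₁ * x₂ ^ 2 + x₁ ^ 2 * z₂ * y₂

-- auxiliary development
abbrev B : Type := MvPolynomial (Fin 3) ℂ

def ι₁ : B →ₐ[ℂ] R := rename ![0, 1, 2]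
def ι₂ : B →ₐ[ℂ] R := rename ![3, 4, 5]

def M (p q r : ℕ) : B := X 0 ^ p * X 1 ^ q * X 2 ^ r

def s (u v : B) : R := ι₁ u * ι₂ v + ι₁ v * ι₂ u

def gg (a b : ℂ) : B := X 1 ^ 3 + C a * X 1 * X 0 ^ 4 + C b * X 0 ^ 6
def ff (a b : ℂ) : B := X 2 ^ 2 - gg a b

def T (a b : ℂ) : Subalgebra ℂ (R ⧸ I a b) :=
  Algebra.adjoin ℂ
      ({Ideal.Quotient.mk (I a b) t₀, Ideal.Quotient.mk (I a b) t₁,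
        Ideal.Quotient.mk (I a b) t₂, Ideal.Quotient.mk (I a b) t₃,
        Ideal.Quotient.mk (I a b) t₄, Ideal.Quotient.mk (I a b) t₅,
        Ideal.Quotient.mk (I a b) t₆} : Set (R ⧸ I a b))

lemma ι₁_M (p q r : ℕ) : ι₁ (M p q r) = z₁ ^ p * x₁ ^ q * y₁ ^ r := by
  simp [ι₁, M, z₁, x₁, y₁, rename_X]

lemma ι₂_M (p q r : ℕ) : ι₂ (M p q r) = z₂ ^ p * x₂ ^ q * y₂ ^ r := by
  simp [ι₂, M, z₂, x₂, y₂, rename_X]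

lemma s_comm (u v : B) : s u v = s v u := by simp [s]; ring

lemma s_mul (u v u' v' : B) :
    s u v * s u' v' = s (u * u') (v * v') + s (u * v') (v * u') := by
  simp only [s, map_mul]; ring

lemma M_mul (p q r p' q' r' : ℕ) :
    M p q r * M p' q' r' = M (p + p') (q + q') (r + r') := by
  simp [M, pow_add]; ring

lemma ι₁_ff (a b : ℂ) : ι₁ (ff a b) = f₁ a b := by
  simp [ι₁, ff, gg, f₁, z₁, x₁, y₁, rename_X]

lemma ι₂_ff (a b : ℂ) : ι₂ (ff a b) = f₂ a b := by
  simp [ι₂, ff, gg, f₂, z₂, x₂, y₂, rename_X]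

/-- `GoodM a b p q r p' q' r'` says the class of `s (M p q r) (M p' q' r')` lies in `T`. -/
def GoodM (a b : ℂ) (p q r p' q' r' : ℕ) : Prop :=
  Ideal.Quotient.mk (I a b) (s (M p q r) (M p' q' r')) ∈ T a b

lemma goodM_comm {a b : ℂ} {p q r p' q' r' : ℕ} (h : GoodM a b p q r p' q' r') :
    GoodM a b p' q' r' p q r := by
  unfold GoodM at *; rwa [s_comm]

lemma mk_t₀ (a b : ℂ) : Ideal.Quotient.mk (I a b) t₀ ∈ T a b :=
  Algebra.subset_adjoin (by simp)
lemma mk_t₁ (a b : ℂ) : Ideal.Quotient.mk (I a b) t₁ ∈ T a b :=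
  Algebra.subset_adjoin (by simp)
lemma mk_t₂ (a b : ℂ) : Ideal.Quotient.mk (I a b) t₂ ∈ T a b :=
  Algebra.subset_adjoin (by simp)
lemma mk_t₃ (a b : ℂ) : Ideal.Quotient.mk (I a b) t₃ ∈ T a b :=
  Algebra.subset_adjoin (by simp)
lemma mk_t₄ (a b : ℂ) : Ideal.Quotient.mk (I a b) t₄ ∈ T a b :=
  Algebra.subset_adjoin (by simp)
lemma mk_t₅ (a b : ℂ) : Ideal.Quotient.mk (I a b) t₅ ∈ T a b :=
  Algebra.subset_adjoin (by simp)
lemma mk_t₆ (a b : ℂ) : Ideal.Quotient.mk (I a b) t₆ ∈ T a b :=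
  Algebra.subset_adjoin (by simp)

/-- Pulling a common monomial factor out of `s`. -/
lemma s_shrink (c d e p q r p' q' r' : ℕ) :
    s (M (c + p) (d + q) (e + r)) (M (c + p') (d + q') (e + r')) =
      t₀ ^ c * t₁ ^ d * t₃ ^ e * s (M p q r) (M p' q' r') := by
  simp only [s, ι₁_M, ι₂_M, t₀, t₁, t₃, pow_add]; ring

lemma goodM_shrink {a b : ℂ} {p q r p' q' r' : ℕ} (c d e : ℕ)
    {P Q Rr P' Q' R' : ℕ}
    (h : GoodM a b p q r p' q' r')
    (e1 : P = c + p) (e2 : Q = d + q) (e3 : Rr = e + r)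
    (e4 : P' = c + p') (e5 : Q' = d + q') (e6 : R' = e + r') :
    GoodM a b P Q Rr P' Q' R' := by
  subst e1 e2 e3 e4 e5 e6
  unfold GoodM
  rw [s_shrink, map_mul, map_mul, map_mul, map_pow, map_pow, map_pow]
  exact mul_mem (mul_mem (mul_mem (pow_mem (mk_t₀ a b) c) (pow_mem (mk_t₁ a b) d))
    (pow_mem (mk_t₃ a b) e)) h

/-- The multiplication relation: `s u v * s u' v' = s (uu') (vv') + s (uv') (vu')`. -/
lemma goodM_mul {a b : ℂ} {p q r p' q' r' c d e c' d' e' : ℕ}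
    {P Q Rr P' Q' R' : ℕ}
    (h1 : GoodM a b p q r p' q' r') (h2 : GoodM a b c d e c' d' e')
    (h3 : GoodM a b (p + c') (q + d') (r + e') (p' + c) (q' + d) (r' + e))
    (e1 : P = p + c) (e2 : Q = q + d) (e3 : Rr = r + e)
    (e4 : P' = p' + c') (e5 : Q' = q' + d') (e6 : R' = r' + e') :
    GoodM a b P Q Rr P' Q' R' := by
  subst e1 e2 e3 e4 e5 e6
  unfold GoodM at *
  have key : s (M (p + c) (q + d) (r + e)) (M (p' + c') (q' + d') (r' + e')) =
      s (M p q r) (M p' q' r') * s (M c d e) (M c' d' e') -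
      s (M (p + c') (q + d') (r + e')) (M (p' + c) (q' + d) (r' + e)) := by
    rw [s_mul]; simp only [M_mul]; ring
  rw [key, map_sub, map_mul]
  exact sub_mem (mul_mem h1 h2) h3

lemma goodM_diag (a b : ℂ) (p q r : ℕ) : GoodM a b p q r p q r := by
  unfold GoodM
  have : s (M p q r) (M p q r) = 2 * (t₀ ^ p * t₁ ^ q * t₃ ^ r) := by
    simp only [s, ι₁_M, ι₂_M, t₀, t₁, t₃]; ring
  rw [this, map_mul]
  exact mul_mem (by exact_mod_cast Subalgebra.natCast_mem _ 2)
    (by rw [map_mul, map_mul, map_pow, map_pow, map_pow];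
        exact mul_mem (mul_mem (pow_mem (mk_t₀ a b) p) (pow_mem (mk_t₁ a b) q))
          (pow_mem (mk_t₃ a b) r))

lemma goodM_t₂ (a b : ℂ) : GoodM a b 2 0 0 0 1 0 := by
  unfold GoodM
  have : s (M 2 0 0) (M 0 1 0) = t₂ := by simp only [s, ι₁_M, ι₂_M, t₂]; ring
  rw [this]; exact mk_t₂ a b

lemma goodM_t₄ (a b : ℂ) : GoodM a b 1 1 0 0 0 1 := by
  unfold GoodM
  have : s (M 1 1 0) (M 0 0 1) = t₄ := by simp only [s, ι₁_M, ι₂_M, t₄]; ring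
  rw [this]; exact mk_t₄ a b

lemma goodM_t₅ (a b : ℂ) : GoodM a b 3 0 0 0 0 1 := by
  unfold GoodM
  have : s (M 3 0 0) (M 0 0 1) = t₅ := by simp only [s, ι₁_M, ι₂_M, t₅]; ring
  rw [this]; exact mk_t₅ a b

lemma goodM_t₆ (a b : ℂ) : GoodM a b 1 0 1 0 2 0 := by
  unfold GoodM
  have : s (M 1 0 1) (M 0 2 0) = t₆ := by simp only [s, ι₁_M, ι₂_M, t₆]; ring
  rw [this]; exact mk_t₆ a b


/-- The statement of the main combinatorial lemma at level `m`. -/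
def GoodAll (a b : ℂ) (m : ℕ) : Prop :=
  ∀ p q r p' q' r' : ℕ, r ≤ 1 → r' ≤ 1 →
    p + 2 * q + 3 * r = m → p' + 2 * q' + 3 * r' = m → GoodM a b p q r p' q' r'

/-- Case A : `s(x^β, z^{2β})`. -/
lemma goodM_xz (a b : ℂ) (m : ℕ) (IH : ∀ k < m, GoodAll a b k)
    (β : ℕ) (hm : 2 * β = m) : GoodM a b 0 β 0 (2 * β) 0 0 := by
  match β, hm with
  | 0, hm => simpa using goodM_diag a b 0 0 0
  | 1, hm => exact goodM_comm (goodM_t₂ a b)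
  | (β' + 2), hm =>
    -- u·u' with u = (x^{β'+1}, z^{2β'+2}), u' = (x, z²) swapped => generator t₂ comm
    refine goodM_mul (p := 0) (q := β' + 1) (r := 0) (p' := 2 * β' + 2) (q' := 0) (r' := 0)
      (c := 0) (d := 1) (e := 0) (c' := 2) (d' := 0) (e' := 0)
      (IH (2 * β' + 2) (by omega) _ _ _ _ _ _ (by omega) (by omega) (by omega) (by omega))
      (goodM_comm (goodM_t₂ a b)) ?_ (by omega) (by omega) (by omega) (by omega) (by omega)
      (by omega)
    -- cross term : GoodM (0+2) (β'+1) 0 (2β'+2) 1 0 ; factor Z² X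
    refine goodM_shrink 2 1 0 (p := 0) (q := β') (r := 0) (p' := 2 * β') (q' := 0) (r' := 0)
      (IH (2 * β') (by omega) _ _ _ _ _ _ (by omega) (by omega) (by omega) (by omega))
      (by omega) (by omega) (by omega) (by omega) (by omega) (by omega)

/-- Case B3 : `s(x^β y, z^{2β+3})`. -/
lemma goodM_xyz (a b : ℂ) (m : ℕ) (IH : ∀ k < m, GoodAll a b k)
    (β : ℕ) (hm : 2 * β + 3 = m) : GoodM a b 0 β 1 (2 * β + 3) 0 0 := by
  match β, hm with
  | 0, hm => exact goodM_comm (goodM_t₅ a b)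
  | (β' + 1), hm =>
    refine goodM_mul (p := 0) (q := β' + 1) (r := 0) (p' := 2 * β' + 2) (q' := 0) (r' := 0)
      (c := 0) (d := 0) (e := 1) (c' := 3) (d' := 0) (e' := 0)
      (IH (2 * β' + 2) (by omega) _ _ _ _ _ _ (by omega) (by omega) (by omega) (by omega))
      (goodM_comm (goodM_t₅ a b)) ?_ (by omega) (by omega) (by omega) (by omega) (by omega)
      (by omega)
    -- cross : GoodM 3 (β'+1) 0 (2β'+2) 0 1 ; factor Z²
    refine goodM_shrink 2 0 0 (p := 1) (q := β' + 1) (r := 0) (p' := 2 * β') (q' := 0) (r' := 1)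
      (IH (2 * β' + 3) (by omega) _ _ _ _ _ _ (by omega) (by omega) (by omega) (by omega))
      (by omega) (by omega) (by omega) (by omega) (by omega) (by omega)

/-- Case B4 : `s(z^{2δ-3} y, x^δ)`. -/
lemma goodM_zyx (a b : ℂ) (m : ℕ) (IH : ∀ k < m, GoodAll a b k)
    (δ : ℕ) (hδ : 2 ≤ δ) (hm : 2 * δ = m) : GoodM a b (2 * δ - 3) 0 1 0 δ 0 := by
  match δ, hδ, hm with
  | 2, _, hm => exact goodM_t₆ a b
  | (δ' + 3), _, hm =>
    -- α = 2δ'+3 ; A = (2δ'+2,0,0 ; 0,δ'+1,0), C = t₆ = (1,0,1 ; 0,2,0)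
    refine goodM_mul (p := 2 * δ' + 2) (q := 0) (r := 0) (p' := 0) (q' := δ' + 1) (r' := 0)
      (c := 1) (d := 0) (e := 1) (c' := 0) (d' := 2) (e' := 0)
      (goodM_comm (goodM_xz a b (2 * δ' + 2) (fun k hk => IH k (by omega)) (δ' + 1) (by omega)))
      (goodM_t₆ a b) ?_ (by omega) (by omega) (by omega) (by omega) (by omega) (by omega)
    -- cross : GoodM (2δ'+2) 2 0 1 (δ'+1) 1 ; factor Z X
    refine goodM_shrink 1 1 0 (p := 2 * δ' + 1) (q := 1) (r := 0) (p' := 0) (q' := δ') (r' := 1)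
      (IH (2 * δ' + 3) (by omega) _ _ _ _ _ _ (by omega) (by omega) (by omega) (by omega))
      (by omega) (by omega) (by omega) (by omega) (by omega) (by omega)


/-- The coprime case with `r = 1`, `r' = 0`. -/
lemma goodM_coprime (a b : ℂ) (m : ℕ) (IH : ∀ k < m, GoodAll a b k)
    (p q p' q' : ℕ) (hpz : p = 0 ∨ p' = 0) (hqz : q = 0 ∨ q' = 0)
    (hd : p + 2 * q + 3 = m) (hd' : p' + 2 * q' = m) :
    GoodM a b p q 1 p' q' 0 := by
  rcases hpz with rfl | rfl <;> rcases hqz with rfl | rfl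
  · -- p = 0, q = 0, m = 3
    have hq' : q' ≤ 1 := by omega
    interval_cases q'
    · have h3 : p' = 3 := by omega
      subst h3; exact goodM_comm (goodM_t₅ a b)
    · have h1 : p' = 1 := by omega
      subst h1; exact goodM_comm (goodM_t₄ a b)
  · -- p = 0, q' = 0
    have h : p' = 2 * q + 3 := by omega
    subst h; exact goodM_xyz a b m IH q (by omega)
  · -- p' = 0, q = 0
    have h : p = 2 * q' - 3 := by omega
    subst h; exact goodM_zyx a b m IH q' (by omega) (by omega)
  · -- p' = 0, q' = 0 : impossible
    exact absurd hd' (by omega)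

lemma goodAll (a b : ℂ) (m : ℕ) : GoodAll a b m := by
  induction m using Nat.strong_induction_on with
  | _ m IH =>
  intro p q r p' q' r' hr hr' hd hd'
  by_cases hz : 0 < p ∧ 0 < p'
  · exact goodM_shrink 1 0 0 (p := p - 1) (q := q) (r := r) (p' := p' - 1) (q' := q') (r' := r')
      (IH (m - 1) (by omega) _ _ _ _ _ _ hr hr' (by omega) (by omega))
      (by omega) (by omega) (by omega) (by omega) (by omega) (by omega)
  by_cases hx : 0 < q ∧ 0 < q'
  · exact goodM_shrink 0 1 0 (p := p) (q := q - 1) (r := r) (p' := p') (q' := q' - 1) (r' := r')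
      (IH (m - 2) (by omega) _ _ _ _ _ _ hr hr' (by omega) (by omega))
      (by omega) (by omega) (by omega) (by omega) (by omega) (by omega)
  by_cases hy : 0 < r ∧ 0 < r'
  · exact goodM_shrink 0 0 1 (p := p) (q := q) (r := r - 1) (p' := p') (q' := q') (r' := r' - 1)
      (IH (m - 3) (by omega) _ _ _ _ _ _ (by omega) (by omega) (by omega) (by omega))
      (by omega) (by omega) (by omega) (by omega) (by omega) (by omega)
  have hpz : p = 0 ∨ p' = 0 := by omega
  have hqz : q = 0 ∨ q' = 0 := by omega
  have hrz : r = 0 ∨ r' = 0 := by omega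
  interval_cases r <;> interval_cases r'
  · -- r = 0, r' = 0
    rcases hpz with rfl | rfl <;> rcases hqz with rfl | rfl
    · have h1 : p' = 0 := by omega
      have h2 : q' = 0 := by omega
      subst h1 h2; exact goodM_diag a b 0 0 0
    · have h : p' = 2 * q := by omega
      subst h; exact goodM_xz a b m IH q (by omega)
    · have h : p = 2 * q' := by omega
      subst h; exact goodM_comm (goodM_xz a b m IH q' (by omega))
    · have h1 : p = 0 := by omega
      have h2 : q = 0 := by omega
      subst h1 h2; exact goodM_diag a b 0 0 0
  · -- r = 0, r' = 1
    exact goodM_comm (goodM_coprime a b m IH p' q' p q (by omega) (by omega) (by omega) (by omega))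
  · -- r = 1, r' = 0
    exact goodM_coprime a b m IH p q p' q' hpz hqz (by omega) (by omega)
  · exact absurd hrz (by omega)


lemma ι₁_C (c : ℂ) : ι₁ (C c) = C c := rename_C _ c
lemma ι₂_C (c : ℂ) : ι₂ (C c) = C c := rename_C _ c

lemma mk_C_mem (a b c : ℂ) : Ideal.Quotient.mk (I a b) (C c) ∈ T a b := by
  have h : (Ideal.Quotient.mk (I a b)) (C c) = algebraMap ℂ (R ⧸ I a b) c := rfl
  rw [h]; exact Subalgebra.algebraMap_mem _ c

lemma M_split (a b : ℂ) (p q k : ℕ) :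
    M p q (k + 2) = ff a b * M p q k +
      (M p (q + 3) k + C a * M (p + 4) (q + 1) k + C b * M (p + 6) q k) := by
  simp only [M, ff, gg, pow_add]; ring

lemma s_split (a b : ℂ) (p q k : ℕ) (v : B) :
    s (M p q (k + 2)) v =
      s (ff a b * M p q k) v +
        (s (M p (q + 3) k) v + C a * s (M (p + 4) (q + 1) k) v +
          C b * s (M (p + 6) q k) v) := by
  rw [M_split a b p q k]
  simp only [s, map_add, map_mul, ι₁_C, ι₂_C]
  ring

lemma q_s_ff (a b : ℂ) (u v : B) :
    Ideal.Quotient.mk (I a b) (s (ff a b * u) v) = 0 := by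
  rw [Ideal.Quotient.eq_zero_iff_mem]
  have h : s (ff a b * u) v = f₁ a b * (ι₁ u * ι₂ v) + (ι₁ v * ι₂ u) * f₂ a b := by
    simp only [s, map_mul, ι₁_ff, ι₂_ff]; ring
  rw [h]
  exact add_mem (Ideal.mul_mem_right _ _ (Ideal.subset_span (by simp)))
    (Ideal.mul_mem_left _ _ (Ideal.subset_span (by simp)))

/-- `s (M p q r) (M p' q' r')` lies in `T` for arbitrary `r, r'` (equal bidegrees). -/
lemma goodS_any (a b : ℂ) :
    ∀ N p q r p' q' r' m, r + r' = N → p + 2 * q + 3 * r = m → p' + 2 * q' + 3 * r' = m →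
      Ideal.Quotient.mk (I a b) (s (M p q r) (M p' q' r')) ∈ T a b := by
  intro N
  induction N using Nat.strong_induction_on with
  | _ N IH =>
  intro p q r p' q' r' m hN hd hd'
  rcases Nat.lt_or_ge r 2 with h2 | h2
  · rcases Nat.lt_or_ge r' 2 with h2' | h2'
    · exact goodAll a b m p q r p' q' r' (by omega) (by omega) hd hd'
    · obtain ⟨k, rfl⟩ : ∃ k, r' = k + 2 := ⟨r' - 2, by omega⟩
      rw [s_comm, s_split a b]
      rw [map_add, q_s_ff, zero_add, map_add, map_add, map_mul, map_mul]
      refine add_mem (add_mem ?_ (mul_mem (mk_C_mem a b a) ?_)) (mul_mem (mk_C_mem a b b) ?_)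
      · exact IH (k + r) (by omega) p' (q' + 3) k p q r m rfl (by omega) (by omega)
      · exact IH (k + r) (by omega) (p' + 4) (q' + 1) k p q r m rfl (by omega) (by omega)
      · exact IH (k + r) (by omega) (p' + 6) q' k p q r m rfl (by omega) (by omega)
  · obtain ⟨k, rfl⟩ : ∃ k, r = k + 2 := ⟨r - 2, by omega⟩
    rw [s_split a b]
    rw [map_add, q_s_ff, zero_add, map_add, map_add, map_mul, map_mul]
    refine add_mem (add_mem ?_ (mul_mem (mk_C_mem a b a) ?_)) (mul_mem (mk_C_mem a b b) ?_)
    · exact IH (k + r') (by omega) p (q + 3) k p' q' r' m rfl (by omega) (by omega)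
    · exact IH (k + r') (by omega) (p + 4) (q + 1) k p' q' r' m rfl (by omega) (by omega)
    · exact IH (k + r') (by omega) (p + 6) q k p' q' r' m rfl (by omega) (by omega)

lemma σ_inj : Function.Injective σ := by decide

lemma σσ (i : Fin 6) : σ (σ i) = i := by revert i; decide

lemma mapDomain_σ (d : Fin 6 →₀ ℕ) (i : Fin 6) :
    Finsupp.mapDomain σ d i = d (σ i) := by
  conv_lhs => rw [← σσ i]
  rw [Finsupp.mapDomain_apply σ_inj]

lemma monomial_pair (d : Fin 6 →₀ ℕ) (c : ℂ) :
    monomial d c + monomial (Finsupp.mapDomain σ d) c =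
      C c * s (M (d 0) (d 1) (d 2)) (M (d 3) (d 4) (d 5)) := by
  have h : ∀ e : Fin 6 →₀ ℕ, monomial e c =
      C c * (X 0 ^ e 0 * X 1 ^ e 1 * X 2 ^ e 2 * X 3 ^ e 3 * X 4 ^ e 4 * X 5 ^ e 5 : R) := by
    intro e
    rw [monomial_eq]
    congr 1
    rw [Finsupp.prod_pow, Fin.prod_univ_six]
  have e0 : σ 0 = 3 := by decide
  have e1 : σ 1 = 4 := by decide
  have e2 : σ 2 = 5 := by decide
  have e3 : σ 3 = 0 := by decide
  have e4 : σ 4 = 1 := by decide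
  have e5 : σ 5 = 2 := by decide
  rw [h, h]
  simp only [mapDomain_σ, e0, e1, e2, e3, e4, e5]
  simp only [s, ι₁_M, ι₂_M, z₁, x₁, y₁, z₂, x₂, y₂]
  ring

lemma weight_eval (w : Fin 6 → ℕ) (d : Fin 6 →₀ ℕ) :
    Finsupp.weight w d = d 0 * w 0 + d 1 * w 1 + d 2 * w 2 + d 3 * w 3 + d 4 * w 4 + d 5 * w 5 := by
  rw [Finsupp.weight_apply, Finsupp.sum_fintype d (fun i c => c • w i) (fun i => by simp), Fin.sum_univ_six]
  simp [smul_eq_mul]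

theorem symmetric_sections_generated' (a b : ℂ) (m : ℕ) (P : R)
    (hP₁ : P.IsWeightedHomogeneous w₁ m) (hP₂ : P.IsWeightedHomogeneous w₂ m)
    (hPσ : rename σ P = P) :
    Ideal.Quotient.mk (I a b) P ∈ T a b := by
  have hrepr : P = C (1 / 2 : ℂ) * ∑ d ∈ P.support,
      (C (coeff d P) * s (M (d 0) (d 1) (d 2)) (M (d 3) (d 4) (d 5))) := by
    have hsum : ∑ d ∈ P.support,
        (C (coeff d P) * s (M (d 0) (d 1) (d 2)) (M (d 3) (d 4) (d 5))) = P + rename σ P := by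
      rw [Finset.sum_congr rfl (fun d _ => (monomial_pair d (coeff d P)).symm),
        Finset.sum_add_distrib, support_sum_monomial_coeff]
      congr 1
      conv_rhs => rw [← support_sum_monomial_coeff P]
      rw [map_sum]
      exact Finset.sum_congr rfl fun d _ => (rename_monomial σ d (coeff d P)).symm
    rw [hsum, hPσ, ← smul_eq_C_mul, ← two_smul ℂ P, smul_smul]
    norm_num
  rw [hrepr, map_mul, map_sum]
  refine mul_mem (mk_C_mem a b _) (sum_mem fun d hd => ?_)
  rw [map_mul]
  refine mul_mem (mk_C_mem a b _) ?_
  have h1 := hP₁ (mem_support_iff.mp hd)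
  have h2 := hP₂ (mem_support_iff.mp hd)
  rw [weight_eval] at h1 h2
  have hw₁ : w₁ 0 = 1 ∧ w₁ 1 = 2 ∧ w₁ 2 = 3 ∧ w₁ 3 = 0 ∧ w₁ 4 = 0 ∧ w₁ 5 = 0 := by
    refine ⟨rfl, rfl, rfl, rfl, rfl, rfl⟩
  have hw₂ : w₂ 0 = 0 ∧ w₂ 1 = 0 ∧ w₂ 2 = 0 ∧ w₂ 3 = 1 ∧ w₂ 4 = 2 ∧ w₂ 5 = 3 := by
    refine ⟨rfl, rfl, rfl, rfl, rfl, rfl⟩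
  obtain ⟨a1, a2, a3, a4, a5, a6⟩ := hw₁
  obtain ⟨b1, b2, b3, b4, b5, b6⟩ := hw₂
  rw [a1, a2, a3, a4, a5, a6] at h1
  rw [b1, b2, b3, b4, b5, b6] at h2
  exact goodS_any a b (d 2 + d 5) (d 0) (d 1) (d 2) (d 3) (d 4) (d 5) m rfl (by omega) (by omega)


/-- Every `σ`-invariant element of bidegree `(m,m)` of the bihomogeneous
coordinate ring `A = R/I` of `E × E` lies in the subalgebra generated by the
classes of `t₀, …, t₆`; i.e. these seven elements generate the section ring
`R(S²E, C₀)`. -/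
theorem symmetric_sections_generated (a b : ℂ) (m : ℕ) (P : R)
    (hP₁ : P.IsWeightedHomogeneous w₁ m) (hP₂ : P.IsWeightedHomogeneous w₂ m)
    (hPσ : rename σ P = P) :
    Ideal.Quotient.mk (I a b) P ∈ Algebra.adjoin ℂ
      ({Ideal.Quotient.mk (I a b) t₀, Ideal.Quotient.mk (I a b) t₁,
        Ideal.Quotient.mk (I a b) t₂, Ideal.Quotient.mk (I a b) t₃,
        Ideal.Quotient.mk (I a b) t₄, Ideal.Quotient.mk (I a b) t₅,
        Ideal.Quotient.mk (I a b) t₆} : Set (R ⧸ I a b)) := by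
  exact symmetric_sections_generated' a b m P hP₁ hP₂ hPσ

end

end Stmt6
end

section
/- Let F ∈ ℂ[x_0,x_1,x_2] be a homogeneous polynomial of degree 4, let L ∈ ℂ[x_0,x_1,x_2] be a nonzero homogeneous linear form, and let p_1, p_2, p_3 ∈ ℂ^3 be nonzero vectors, pairwise non-proportional, such that L(p_i) = 0 for all i and such that all three partial derivatives of F vanish at each p_i (i.e., each p_i is a singular point of the quartic curve F = 0 lying on the line L = 0). Then L divides F in ℂ[x_0,x_1,x_2]. -/
/-!
On the line `L = 0`, parametrised as `t ↦ F (p₁ + t • p₂)`, the quartic `F` restricts to a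
polynomial of degree at most `4` whose coefficient of `t ^ 4` is `F p₂`; this vanishes by Euler's
identity since `p₂` is singular. The singular points `p₁` and `p₃ ∼ p₁ + r • p₂` (`r ≠ 0`) are
double roots, at `0` and `r`, of this polynomial of degree at most `3`, so it is zero. By
homogeneity `F` then vanishes on the whole plane `L = 0`, and as `L` is prime the
Nullstellensatz gives `L ∣ F`.
-/

open MvPolynomial
open scoped Polynomial

theorem Polynomial.eq_zero_of_double_roots_of_natDegree_lt_four {K : Type*} [Field K] {p : K[X]}
    {a b : K} (hab : a ≠ b) (hp : p.natDegree < 4) (ha : p.IsRoot a) (ha' : p.derivative.IsRoot a)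
    (hb : p.IsRoot b) (hb' : p.derivative.IsRoot b) : p = 0 := by
  by_contra hp0
  have hsq : ∀ c, p.IsRoot c → p.derivative.IsRoot c → (X - C c) ^ 2 ∣ p := fun c h h' =>
    (le_rootMultiplicity_iff hp0).mp ((one_lt_rootMultiplicity_iff_isRoot hp0).mpr ⟨h, h'⟩)
  have hdvd : (X - C a) ^ 2 * (X - C b) ^ 2 ∣ p :=
    (isCoprime_X_sub_C_of_isUnit_sub (sub_ne_zero.mpr hab).isUnit).pow.mul_dvd
      (hsq a ha ha') (hsq b hb hb')
  have := natDegree_le_of_dvd hdvd hp0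
  rw [natDegree_mul (by simp [X_sub_C_ne_zero]) (by simp [X_sub_C_ne_zero])] at this
  simp only [natDegree_pow, natDegree_sub_C, natDegree_X, mul_one, Nat.reduceAdd] at this
  omega

section LinearAlgebra

variable {K V : Type*} [Field K] [AddCommGroup V] [Module K V]

theorem Module.Dual.ker_eq_span_pair [FiniteDimensional K V] (hV : Module.finrank K V = 3)
    {ℓ : Module.Dual K V} (hℓ : ℓ ≠ 0) {x y : V} (hxy : LinearIndependent K ![x, y])
    (hx : ℓ x = 0) (hy : ℓ y = 0) : LinearMap.ker ℓ = Submodule.span K {x, y} := by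
  symm
  apply Submodule.eq_of_le_of_finrank_eq
  · simp [Submodule.span_le, Set.insert_subset_iff, hx, hy]
  · have hspan := finrank_span_eq_card hxy
    have hker := ℓ.finrank_ker_add_one_of_ne_zero hℓ
    rw [Matrix.range_cons_cons_empty, Fintype.card_fin] at hspan
    omega

theorem right_ne_zero_of_smul_add_smul_eq {x y z : V} {a b : K} (hz : z ≠ 0)
    (hxz : ∀ c : K, x ≠ c • z) (h : a • x + b • y = z) : b ≠ 0 := by
  rintro rfl
  rw [zero_smul, add_zero] at h
  have ha : a ≠ 0 := by rintro rfl; exact hz (by rw [← h, zero_smul])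
  exact hxz a⁻¹ (by rw [← h, smul_smul, inv_mul_cancel₀ ha, one_smul])

end LinearAlgebra

namespace MvPolynomial

section CommSemiring

variable {σ R : Type*} [CommSemiring R] {φ : MvPolynomial σ R} {n : ℕ}

theorem IsHomogeneous.eval_smul (hφ : φ.IsHomogeneous n) (c : R) (x : σ → R) :
    eval (c • x) φ = c ^ n * eval x φ := by
  rw [eval_eq, eval_eq, Finset.mul_sum]
  refine Finset.sum_congr rfl fun d hd => ?_
  have hd : d.degree = n := by rw [Finsupp.degree_eq_weight_one]; exact hφ (mem_support_iff.mp hd)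
  simp only [Pi.smul_apply, smul_eq_mul, mul_pow, Finset.prod_mul_distrib,
    Finset.prod_pow_eq_pow_sum, ← Finsupp.degree_apply, hd]
  ring

theorem aeval_monomial_one {A : Type*} [CommSemiring A] [Algebra R A] (v : σ → A)
    (d : σ →₀ ℕ) : aeval v (monomial d (1 : R)) = (d.toMultiset.map v).prod := by
  rw [aeval_monomial, map_one, one_mul, Finsupp.toMultiset_map, Finsupp.prod_toMultiset,
    Finsupp.prod_mapDomain_index (fun _ => pow_zero _) (fun _ _ _ => pow_add _ _ _)]

theorem IsHomogeneous.natDegree_aeval_le_and_coeff (hφ : φ.IsHomogeneous n) {v : σ → R[X]}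
    (hv : ∀ i, (v i).natDegree ≤ 1) :
    (MvPolynomial.aeval v φ).natDegree ≤ n ∧
      (MvPolynomial.aeval v φ).coeff n = eval (fun i => (v i).coeff 1) φ := by
  rw [← mem_homogeneousSubmodule, homogeneousSubmodule_eq_finsupp_supported,
    AddMonoidAlgebra.supported_eq_span_single] at hφ
  induction hφ using Submodule.span_induction with
  | mem _ hd =>
    obtain ⟨d, hd, rfl⟩ := hd
    simp only [single_eq_monomial]
    have hcard : Multiset.card (d.toMultiset.map v) = n := by
      simpa [Finsupp.degree_apply, Finsupp.sum] using hd
    have hle : ∀ p ∈ d.toMultiset.map v, p.natDegree ≤ 1 := by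
      simp only [Multiset.mem_map]; rintro _ ⟨i, -, rfl⟩; exact hv i
    rw [aeval_monomial_one, ← coe_aeval_eq_eval, AlgHom.coe_toRingHom, aeval_monomial_one]
    constructor
    · refine (Polynomial.natDegree_multiset_prod_le _).trans ?_
      have := Multiset.sum_le_card_nsmul _ 1 (Multiset.forall_mem_map_iff.mpr hle)
      rwa [Multiset.card_map, hcard, smul_eq_mul, mul_one] at this
    · simpa [hcard, Multiset.map_map] using Polynomial.coeff_multiset_prod_of_natDegree_le _ 1 hle
  | zero => simp
  | add φ ψ _ _ hφ hψ =>
    simp only [map_add, Polynomial.coeff_add, hφ.2, hψ.2, and_true]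
    exact (Polynomial.natDegree_add_le _ _).trans (max_le hφ.1 hψ.1)
  | smul c φ _ hφ =>
    rw [map_smul, smul_eval, Polynomial.coeff_smul, hφ.2]
    exact ⟨(Polynomial.natDegree_smul_le _ _).trans hφ.1, by simp⟩

theorem derivative_aeval [Fintype σ] (v : σ → R[X]) (φ : MvPolynomial σ R) :
    Polynomial.derivative (aeval v φ) =
      ∑ i, Polynomial.derivative (v i) * aeval v (pderiv i φ) := by
  classical
  induction φ using MvPolynomial.induction_on with
  | C a => simp
  | add φ ψ hφ hψ => simp only [map_add, hφ, hψ, mul_add, Finset.sum_add_distrib]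
  | mul_X φ i hφ =>
    simp only [map_mul, aeval_X, Polynomial.derivative_mul, hφ, Derivation.leibniz, pderiv_X,
      smul_eq_mul, map_add, mul_add, Finset.sum_add_distrib, Finset.sum_mul, Pi.single_apply]
    rw [add_comm]
    congr 1
    · simp [mul_comm]
    · exact Finset.sum_congr rfl fun _ _ => by ring

noncomputable def restrictLine (φ : MvPolynomial σ R) (u w : σ → R) : R[X] :=
  aeval (fun i => Polynomial.C (w i) * Polynomial.X + Polynomial.C (u i)) φ

theorem eval_restrictLine (φ : MvPolynomial σ R) (u w : σ → R) (t : R) :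
    (φ.restrictLine u w).eval t = eval (u + t • w) φ := by
  rw [restrictLine, aeval_def, polynomial_eval_eval₂, eval]
  congr 1
  · ext; simp
  · funext i
    simp only [Polynomial.eval_add, Polynomial.eval_C, Polynomial.eval_mul, Polynomial.eval_X,
      Pi.add_apply, Pi.smul_apply, smul_eq_mul, mul_comm, add_comm]

theorem derivative_restrictLine [Fintype σ] (φ : MvPolynomial σ R) (u w : σ → R) :
    Polynomial.derivative (φ.restrictLine u w) =
      ∑ i, Polynomial.C (w i) * (pderiv i φ).restrictLine u w := by
  simp [restrictLine, derivative_aeval]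

theorem IsHomogeneous.natDegree_restrictLine_lt (hφ : φ.IsHomogeneous n) (hn : n ≠ 0)
    (u : σ → R) {w : σ → R} (hw : eval w φ = 0) : (φ.restrictLine u w).natDegree < n := by
  obtain ⟨hle, hcoeff⟩ := hφ.natDegree_aeval_le_and_coeff (v := fun i =>
    Polynomial.C (w i) * Polynomial.X + Polynomial.C (u i)) fun _ => Polynomial.natDegree_linear_le
  have := Polynomial.natDegree_le_pred hle (by simpa [hw] using hcoeff)
  rw [restrictLine]
  omega

def IsSingularPoint (φ : MvPolynomial σ R) (x : σ → R) : Prop :=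
  ∀ i, eval x (pderiv i φ) = 0

theorem IsHomogeneous.isSingularPoint_smul (hφ : φ.IsHomogeneous n) {x : σ → R}
    (hx : φ.IsSingularPoint x) (c : R) : φ.IsSingularPoint (c • x) := fun i => by
  rw [hφ.pderiv.eval_smul, hx i, mul_zero]

theorem IsSingularPoint.isRoot_derivative_restrictLine [Fintype σ] {u w : σ → R} {t : R}
    (h : φ.IsSingularPoint (u + t • w)) :
    (Polynomial.derivative (φ.restrictLine u w)).IsRoot t := by
  simp [derivative_restrictLine, Polynomial.eval_finsetSum, eval_restrictLine, h _]

end CommSemiring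

section Field

variable {σ K : Type*} [Field K] {F : MvPolynomial σ K} {n : ℕ}

theorem IsHomogeneous.eval_eq_zero_of_isSingularPoint [Fintype σ] [CharZero K]
    (hF : F.IsHomogeneous n) (hn : n ≠ 0) {x : σ → K} (hx : F.IsSingularPoint x) :
    eval x F = 0 := by
  have euler := congrArg (eval x) hF.sum_X_mul_pderiv
  simp only [map_sum, map_mul, eval_X, hx _, mul_zero, Finset.sum_const_zero, map_nsmul] at euler
  simpa [hn] using euler.symm

theorem IsHomogeneous.eval_smul_add_smul_eq_zero [Fintype σ] [CharZero K]
    (hF : F.IsHomogeneous n) (hn : n ≠ 0) (hn4 : n ≤ 4) {u w : σ → K} {r : K} (hr : r ≠ 0)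
    (hu : F.IsSingularPoint u) (hw : F.IsSingularPoint w) (hurw : F.IsSingularPoint (u + r • w))
    (s t : K) : eval (s • u + t • w) F = 0 := by
  have hFw := hF.eval_eq_zero_of_isSingularPoint hn hw
  have hline : F.restrictLine u w = 0 := by
    refine Polynomial.eq_zero_of_double_roots_of_natDegree_lt_four hr.symm
      ((hF.natDegree_restrictLine_lt hn u hFw).trans_le hn4) ?_ ?_ ?_ ?_
    · simpa [Polynomial.IsRoot, eval_restrictLine] using hF.eval_eq_zero_of_isSingularPoint hn hu
    · exact IsSingularPoint.isRoot_derivative_restrictLine (by simpa using hu)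
    · simpa [Polynomial.IsRoot, eval_restrictLine] using hF.eval_eq_zero_of_isSingularPoint hn hurw
    · exact hurw.isRoot_derivative_restrictLine
  rcases eq_or_ne s 0 with rfl | hs
  · simp [hF.eval_smul, hFw]
  · have : s • u + t • w = s • (u + (t / s) • w) := by
      rw [smul_add, smul_smul, mul_div_cancel₀ _ hs]
    rw [this, hF.eval_smul, ← eval_restrictLine, hline, Polynomial.eval_zero, mul_zero]

theorem IsHomogeneous.exists_dual_eval_eq [Fintype σ] {L : MvPolynomial σ K}
    (hL : L.IsHomogeneous 1) : ∃ ℓ : Module.Dual K (σ → K), ∀ x, ℓ x = eval x L := by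
  have hmem : L ∈ Submodule.span K (Set.range X) := by
    rw [← homogeneousSubmodule_one_eq_span_X]; exact hL
  obtain ⟨c, rfl⟩ := (Submodule.mem_span_range_iff_exists_fun K).mp hmem
  exact ⟨∑ i, c i • LinearMap.proj i, fun x => by simp⟩

theorem IsHomogeneous.eval_eq_zero_iff_mem_span_pair [Infinite K] {L : MvPolynomial (Fin 3) K}
    (hL : L.IsHomogeneous 1) (hL0 : L ≠ 0) {x y : Fin 3 → K} (hxy : LinearIndependent K ![x, y])
    (hx : eval x L = 0) (hy : eval y L = 0) (z : Fin 3 → K) :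
    eval z L = 0 ↔ z ∈ Submodule.span K {x, y} := by
  obtain ⟨ℓ, hℓ⟩ := hL.exists_dual_eval_eq
  have hℓ0 : ℓ ≠ 0 := by
    rintro rfl
    exact hL0 (MvPolynomial.funext fun x => by simp [← hℓ])
  rw [← ℓ.ker_eq_span_pair (by simp) hℓ0 hxy (by rwa [hℓ]) (by rwa [hℓ]), LinearMap.mem_ker, hℓ]

theorem IsHomogeneous.prime_of_ne_zero [Finite σ] {L : MvPolynomial σ K}
    (hL : L.IsHomogeneous 1) (hL0 : L ≠ 0) : Prime L := by
  refine (irreducible_of_totalDegree_eq_one (hL.totalDegree hL0) fun c hc => ?_).prime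
  refine isUnit_iff_ne_zero.mpr fun hc0 => hL0 (MvPolynomial.ext _ _ fun d => ?_)
  simpa [hc0] using hc d

theorem dvd_of_forall_eval_eq_zero [Finite σ] [IsAlgClosed K] {L : MvPolynomial σ K}
    (hL : Prime L) (h : ∀ x, eval x L = 0 → eval x F = 0) : L ∣ F := by
  have : (Ideal.span {L}).IsPrime := (Ideal.span_singleton_prime hL.ne_zero).mpr hL
  rw [← Ideal.mem_span_singleton, ← IsPrime.vanishingIdeal_zeroLocus (K := K) (Ideal.span {L})]
  intro x hx
  exact h x (hx L (Ideal.mem_span_singleton_self L))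

end Field

end MvPolynomial

theorem line_through_three_singular_points_divides_quartic_general
    (F L : MvPolynomial (Fin 3) ℂ)
    (hF : F.IsHomogeneous 4) (hL : L.IsHomogeneous 1) (hL0 : L ≠ 0)
    (p₁ p₂ p₃ : Fin 3 → ℂ)
    (hp₂ : p₂ ≠ 0) (hp₃ : p₃ ≠ 0)
    (h₁₂ : ∀ c : ℂ, p₁ ≠ c • p₂) (h₁₃ : ∀ c : ℂ, p₁ ≠ c • p₃)
    (h₂₃ : ∀ c : ℂ, p₂ ≠ c • p₃)
    (hLp : eval p₁ L = 0 ∧ eval p₂ L = 0 ∧ eval p₃ L = 0)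
    (hsing : ∀ j : Fin 3,
      eval p₁ (pderiv j F) = 0 ∧ eval p₂ (pderiv j F) = 0 ∧ eval p₃ (pderiv j F) = 0) :
    L ∣ F := by
  have hind : LinearIndependent ℂ ![p₂, p₁] :=
    (LinearIndependent.pair_iff' hp₂).mpr fun c h => h₁₂ c h.symm
  have hplane := hL.eval_eq_zero_iff_mem_span_pair hL0 hind hLp.2.1 hLp.1
  obtain ⟨a, b, hp₃ab⟩ := Submodule.mem_span_pair.mp ((hplane p₃).mp hLp.2.2)
  have hb := right_ne_zero_of_smul_add_smul_eq hp₃ h₂₃ hp₃ab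
  have ha := right_ne_zero_of_smul_add_smul_eq hp₃ h₁₃ ((add_comm _ _).trans hp₃ab)
  have hsing₃ : F.IsSingularPoint (p₁ + (a / b) • p₂) := by
    have : p₁ + (a / b) • p₂ = b⁻¹ • p₃ := by
      rw [← hp₃ab, smul_add, smul_smul, smul_smul, inv_mul_cancel₀ hb, one_smul, add_comm,
        div_eq_inv_mul]
    rw [this]
    exact hF.isSingularPoint_smul (fun j => (hsing j).2.2) _
  have hvanish := hF.eval_smul_add_smul_eq_zero (by norm_num) le_rfl (div_ne_zero ha hb)
    (fun j => (hsing j).1) (fun j => (hsing j).2.1) hsing₃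
  refine dvd_of_forall_eval_eq_zero (hL.prime_of_ne_zero hL0) fun x hx => ?_
  obtain ⟨t, s, rfl⟩ := Submodule.mem_span_pair.mp ((hplane x).mp hx)
  rw [add_comm]
  exact hvanish s t

/-- Three pairwise non-proportional singular points of a plane quartic lying
on a line force that line to be a component: if `F` is a homogeneous quartic,
`L ≠ 0` a homogeneous linear form vanishing at three nonzero, pairwise
non-proportional points `p₁, p₂, p₃` at which all partial derivatives of `F`
vanish, then `L ∣ F`. -/
theorem line_through_three_singular_points_divides_quartic
    (F L : MvPolynomial (Fin 3) ℂ)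
    (hF : F.IsHomogeneous 4) (hL : L.IsHomogeneous 1) (hL0 : L ≠ 0)
    (p₁ p₂ p₃ : Fin 3 → ℂ)
    (hp₁ : p₁ ≠ 0) (hp₂ : p₂ ≠ 0) (hp₃ : p₃ ≠ 0)
    (h₁₂ : ∀ c : ℂ, p₁ ≠ c • p₂) (h₁₃ : ∀ c : ℂ, p₁ ≠ c • p₃)
    (h₂₃ : ∀ c : ℂ, p₂ ≠ c • p₃)
    (hLp : eval p₁ L = 0 ∧ eval p₂ L = 0 ∧ eval p₃ L = 0)
    (hsing : ∀ j : Fin 3,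
      eval p₁ (pderiv j F) = 0 ∧ eval p₂ (pderiv j F) = 0 ∧ eval p₃ (pderiv j F) = 0) :
    L ∣ F :=
  line_through_three_singular_points_divides_quartic_general F L hF hL hL0 p₁ p₂ p₃ hp₂ hp₃ h₁₂ h₁₃
    h₂₃ hLp hsing
end
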